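/- Let R be a ring that can be written as R = S + K, where S is a subring of R and K is a nil two-sided ideal of R. Then S is a GNC ring if and only if R is a GNC ring. -/

import Mathlib

/-- An element is nil-clean if it is the sum of an idempotent and a nilpotent. -/
def IsNilClean {R : Type*} [Ring R] (a : R) : Prop :=
  ∃ e q : R, IsIdempotentElem e ∧ IsNilpotent q ∧ a = e + q

/-- A ring is GNC (generalized nil-clean) if every non-unit is nil-clean. -/
def IsGNC (R : Type*) [Ring R] : Prop :=
  ∀ a : R, ¬ IsUnit a → IsNilClean a

/-!
Both `S` and `R` map onto `R ⧸ K` with nil kernel (`S ∩ K` and `K`), so it suffices to show that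
being GNC passes both ways along a surjection `f : A → B` with nil kernel. Such an `f` reflects
units (if `f (a * b) = 1 = f (b * a)` then `a * b` and `b * a` are `1` plus a nilpotent) and
nilpotents, and idempotents lift along it; hence `a` is nil-clean iff `f a` is.
-/

section NilKernel

variable {A B : Type*} [Ring A] [Ring B] (f : A →+* B)

theorem IsNilClean.map {a : A} (ha : IsNilClean a) : IsNilClean (f a) := by
  obtain ⟨e, q, he, hq, rfl⟩ := ha
  exact ⟨f e, f q, he.map f, hq.map f, map_add f e q⟩

variable {f} (hker : ∀ x ∈ RingHom.ker f, IsNilpotent x)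
include hker

theorem isNilpotent_of_map_isNilpotent {x : A} (hx : IsNilpotent (f x)) : IsNilpotent x := by
  obtain ⟨m, hm⟩ := hx
  exact (hker _ (by rw [RingHom.mem_ker, map_pow, hm])).of_pow

theorem isUnit_of_map_eq_one {x : A} (hx : f x = 1) : IsUnit x := by
  have hnil : IsNilpotent (x - 1) := hker _ (by rw [RingHom.mem_ker, map_sub, hx, map_one, sub_self])
  simpa using hnil.isUnit_add_one

theorem isUnit_of_map_isUnit (hf : Function.Surjective f) {a : A} (ha : IsUnit (f a)) :
    IsUnit a := by
  obtain ⟨b, hb⟩ := hf ↑ha.unit⁻¹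
  have hab : IsUnit (a * b) := isUnit_of_map_eq_one hker (by simp [hb])
  have hba : IsUnit (b * a) := isUnit_of_map_eq_one hker (by simp [hb])
  refine isUnit_iff_exists_and_exists.mpr ⟨⟨b * ↑hab.unit⁻¹, ?_⟩, ⟨↑hba.unit⁻¹ * b, ?_⟩⟩
  · rw [← mul_assoc, hab.mul_val_inv]
  · rw [mul_assoc, hba.val_inv_mul]

theorem IsNilClean.of_map (hf : Function.Surjective f) {a : A} (ha : IsNilClean (f a)) :
    IsNilClean a := by
  obtain ⟨e, q, he, hq, hfa⟩ := ha
  obtain ⟨e', he', rfl⟩ :=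
    exists_isIdempotentElem_eq_of_ker_isNilpotent f hker e (hf e) he
  refine ⟨e', a - e', he', isNilpotent_of_map_isNilpotent hker ?_, (add_sub_cancel e' a).symm⟩
  rwa [map_sub, hfa, add_sub_cancel_left]

theorem isGNC_iff_of_surjective (hf : Function.Surjective f) : IsGNC A ↔ IsGNC B := by
  constructor
  · intro hA b hb
    obtain ⟨a, rfl⟩ := hf b
    exact (hA a fun ha ↦ hb (ha.map f)).map f
  · intro hB a ha
    exact (hB (f a) fun hfa ↦ ha (isUnit_of_map_isUnit hker hf hfa)).of_map hker hf

end NilKernel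

theorem subring_gnc_iff_gnc_of_nil_ideal {R : Type*} [Ring R] (S : Subring R)
    (K : TwoSidedIdeal R) (hK : ∀ x ∈ K, IsNilpotent x)
    (hSK : ∀ r : R, ∃ s ∈ S, ∃ k ∈ K, r = s + k) :
    IsGNC S ↔ IsGNC R := by
  set π := K.ringCon.mk'
  have mem_ker_π : ∀ x, x ∈ RingHom.ker π ↔ x ∈ K := fun x ↦ by
    rw [RingHom.mem_ker, ← TwoSidedIdeal.mem_ker, TwoSidedIdeal.ker_ringCon_mk']
  have hπ_ker : ∀ x ∈ RingHom.ker π, IsNilpotent x := fun x hx ↦ hK x ((mem_ker_π x).mp hx)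
  have hπS_ker : ∀ x ∈ RingHom.ker (π.comp S.subtype), IsNilpotent x := fun x hx ↦
    (IsNilpotent.map_iff (f := S.subtype) Subtype.val_injective).mp (hπ_ker x hx)
  have hπS : Function.Surjective (π.comp S.subtype) := by
    intro y
    obtain ⟨r, rfl⟩ := K.ringCon.mk'_surjective y
    obtain ⟨s, hs, k, hk, rfl⟩ := hSK r
    refine ⟨⟨s, hs⟩, ?_⟩
    simp [π, map_add, RingHom.mem_ker.mp ((mem_ker_π k).mpr hk)]
  exact (isGNC_iff_of_surjective hπS_ker hπS).trans
    (isGNC_iff_of_surjective hπ_ker K.ringCon.mk'_surjective).symm
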